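/- If a word u over {L,R} is a prefix of a word w over {L,R}, then D²[P_u] ≤ D²[P_w]. -/
import Mathlib


/-- The probability mass functions `P t` on ℤ, defined by
`P 1 = δ₀`, `P (2t) = P t`, `P (2t+1) d = ½ P (t+1) (d+1) + ½ P t (d-1)`. -/
noncomputable def P : ℕ → ℤ → ℝ
  | 0, _ => 0
  | 1, d => if d = 0 then 1 else 0
  | (n+2), d =>
      if h : (n + 2) % 2 = 0 then P ((n+2)/2) d
      else (1/2) * P ((n+2)/2 + 1) (d+1) + (1/2) * P ((n+2)/2) (d-1)
  decreasing_by all_goals omega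

/-- Letters of the alphabet. -/
inductive LR | L | R
deriving DecidableEq

/-- One step of the identification of words with odd integers: `L : t ↦ 2t-1`, `R : t ↦ 2t+1`. -/
def LRstep (t : ℕ) : LR → ℕ
  | LR.L => 2 * t - 1
  | LR.R => 2 * t + 1

/-- The odd integer associated to a word over `{L,R}`, starting from 3. -/
def hword (w : List LR) : ℕ := w.foldl LRstep 3

/-- The variance `D²[p] = ∑ k² p(k)` of a mean-zero probability mass function on ℤ. -/
noncomputable def var (p : ℤ → ℝ) : ℝ := ∑' k : ℤ, (k : ℝ) ^ 2 * p k

lemma P_one (d : ℤ) : P 1 d = if d = 0 then 1 else 0 := by rw [P]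

lemma P_two_mul (t : ℕ) (ht : 1 ≤ t) (d : ℤ) : P (2*t) d = P t d := by
  have h : 2*t = (2*t-2)+2 := by omega
  rw [h, P]
  have : ((2*t-2)+2) % 2 = 0 := by omega
  rw [dif_pos this]
  congr 1
  omega

lemma P_odd (t : ℕ) (ht : 1 ≤ t) (d : ℤ) :
    P (2*t+1) d = (1/2) * P (t+1) (d+1) + (1/2) * P t (d-1) := by
  have h : 2*t+1 = (2*t-1)+2 := by omega
  rw [h, P]
  have h2 : ¬ ((2*t-1)+2) % 2 = 0 := by omega
  rw [dif_neg h2]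
  have h3 : ((2*t-1)+2)/2 = t := by omega
  rw [h3]

lemma P_supp : ∀ t : ℕ, 1 ≤ t → ∀ d : ℤ, (t:ℤ) ≤ |d| → P t d = 0 := by
  intro t
  induction t using Nat.strong_induction_on with
  | _ t IH =>
    intro ht d hd
    match t, ht with
    | 1, _ =>
      have : d ≠ 0 := by rcases abs_cases d with ⟨h1,h2⟩|⟨h1,h2⟩ <;> omega
      simp [P_one, this]
    | (n+2), _ =>
      rcases Nat.even_or_odd (n+2) with ⟨m, hm⟩ | ⟨m, hm⟩
      · have hm1 : 1 ≤ m := by omega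
        have : n + 2 = 2*m := by omega
        rw [this, P_two_mul m hm1 d]
        exact IH m (by omega) hm1 d (by push_cast; omega)
      · have hm1 : 1 ≤ m := by omega
        have : n + 2 = 2*m+1 := by omega
        rw [this, P_odd m hm1 d]
        rw [IH (m+1) (by omega) (by omega) (d+1) (by rcases abs_cases d with ⟨h1,h2⟩|⟨h1,h2⟩ <;> rcases abs_cases (d+1) with ⟨h3,h4⟩|⟨h3,h4⟩ <;> push_cast <;> omega)]
        rw [IH m (by omega) hm1 (d-1) (by rcases abs_cases d with ⟨h1,h2⟩|⟨h1,h2⟩ <;> rcases abs_cases (d-1) with ⟨h3,h4⟩|⟨h3,h4⟩ <;> push_cast <;> omega)]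
        ring

lemma summable_of_bounded_supp (f : ℤ → ℝ) (N : ℤ) (h : ∀ d : ℤ, N ≤ |d| → f d = 0) :
    Summable f := by
  apply summable_of_ne_finset_zero (s := Finset.Icc (-N) N)
  intro d hd
  simp only [Finset.mem_Icc, not_and_or, not_le] at hd
  apply h
  rcases abs_cases d with ⟨h1,h2⟩|⟨h1,h2⟩ <;> omega

lemma summable_gP (t : ℕ) (ht : 1 ≤ t) (g : ℤ → ℝ) : Summable (fun d => g d * P t d) :=
  summable_of_bounded_supp _ t (fun d hd => by rw [P_supp t ht d hd, mul_zero])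

lemma summable_gP_shift (t : ℕ) (ht : 1 ≤ t) (g : ℤ → ℝ) (c : ℤ) :
    Summable (fun d => g d * P t (d + c)) :=
  summable_of_bounded_supp _ (t + |c|) (fun d hd => by
    rw [P_supp t ht (d+c) (by
      have h2 := abs_add_le (d+c) (-c)
      simp only [add_neg_cancel_right, abs_neg] at h2
      omega), mul_zero])

lemma tsum_odd (t : ℕ) (ht : 1 ≤ t) (g : ℤ → ℝ) :
    ∑' d : ℤ, g d * P (2*t+1) d
      = (1/2) * ∑' d : ℤ, g (d-1) * P (t+1) d + (1/2) * ∑' d : ℤ, g (d+1) * P t d := by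
  have h1 : Summable (fun d : ℤ => (1/2 : ℝ) * (g d * P (t+1) (d+1))) :=
    ((summable_gP_shift (t+1) (by omega) g 1).mul_left _)
  have h2 : Summable (fun d : ℤ => (1/2 : ℝ) * (g d * P t (d-1))) := by
    have := (summable_gP_shift t ht g (-1)).mul_left (1/2 : ℝ)
    simpa [sub_eq_add_neg] using this
  have step : ∀ d : ℤ, g d * P (2*t+1) d
      = (1/2 : ℝ) * (g d * P (t+1) (d+1)) + (1/2) * (g d * P t (d-1)) := by
    intro d; rw [P_odd t ht d]; ring
  rw [tsum_congr step, Summable.tsum_add h1 h2, tsum_mul_left, tsum_mul_left]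
  congr 1
  · congr 1
    have := (Equiv.addRight (1:ℤ)).tsum_eq (fun k => g (k-1) * P (t+1) k)
    simp only [Equiv.coe_addRight, add_sub_cancel_right] at this
    exact this
  · congr 1
    have := (Equiv.subRight (1:ℤ)).tsum_eq (fun k => g (k+1) * P t k)
    simp only [Equiv.subRight_apply, sub_add_cancel] at this
    exact this

lemma P_summable (t : ℕ) (ht : 1 ≤ t) : Summable (P t) := by
  simpa using summable_gP t ht (fun _ => 1)

lemma P_mass : ∀ t : ℕ, 1 ≤ t → ∑' d : ℤ, P t d = 1 := by
  intro t
  induction t using Nat.strong_induction_on with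
  | _ t IH =>
    intro ht
    match t, ht with
    | 1, _ =>
      rw [tsum_eq_single 0 (by intro b hb; simp [P_one, hb])]
      simp [P_one]
    | (n+2), _ =>
      rcases Nat.even_or_odd (n+2) with ⟨m, hm⟩ | ⟨m, hm⟩
      · have hm1 : 1 ≤ m := by omega
        have h2 : n + 2 = 2*m := by omega
        rw [h2, tsum_congr (P_two_mul m hm1)]
        exact IH m (by omega) hm1
      · have hm1 : 1 ≤ m := by omega
        have h2 : n + 2 = 2*m+1 := by omega
        have e : ∀ d : ℤ, P (2*m+1) d = (fun d : ℤ => (1:ℝ)) d * P (2*m+1) d := by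
          intro d; simp
        rw [h2, tsum_congr e, tsum_odd m hm1 (fun _ => 1)]
        rw [tsum_congr (fun d : ℤ => one_mul (P (m+1) d)), tsum_congr (fun d : ℤ => one_mul (P m d))]
        rw [IH (m+1) (by omega) (by omega), IH m (by omega) hm1]
        norm_num

lemma P_mean : ∀ t : ℕ, 1 ≤ t → ∑' d : ℤ, (d:ℝ) * P t d = 0 := by
  intro t
  induction t using Nat.strong_induction_on with
  | _ t IH =>
    intro ht
    match t, ht with
    | 1, _ =>
      rw [tsum_eq_single 0 (by intro b hb; simp [P_one, hb])]
      simp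
    | (n+2), _ =>
      rcases Nat.even_or_odd (n+2) with ⟨m, hm⟩ | ⟨m, hm⟩
      · have hm1 : 1 ≤ m := by omega
        have h2 : n + 2 = 2*m := by omega
        have e : ∀ d : ℤ, (d:ℝ) * P (2*m) d = (d:ℝ) * P m d := by
          intro d; rw [P_two_mul m hm1]
        rw [h2, tsum_congr e]
        exact IH m (by omega) hm1
      · have hm1 : 1 ≤ m := by omega
        have h2 : n + 2 = 2*m+1 := by omega
        rw [h2, tsum_odd m hm1 (fun d => (d:ℝ))]
        have key : ∀ s : ℕ, 1 ≤ s → s < n + 2 → ∀ c : ℝ,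
            ∑' d : ℤ, ((d:ℝ) + c) * P s d = c := by
          intro s hs hlt c
          have e : ∀ d : ℤ, ((d:ℝ) + c) * P s d = (d:ℝ) * P s d + c * P s d := by
            intro d; ring
          rw [tsum_congr e, Summable.tsum_add (summable_gP s hs (fun d => (d:ℝ)))
            ((P_summable s hs).mul_left c), tsum_mul_left, IH s hlt hs, P_mass s hs]
          ring
        have k1 : ∑' d : ℤ, ((d - 1 : ℤ):ℝ) * P (m+1) d = -1 := by
          rw [← key (m+1) (by omega) (by omega) (-1)]
          apply tsum_congr; intro d; push_cast; ring
        have k2 : ∑' d : ℤ, ((d + 1 : ℤ):ℝ) * P m d = 1 := by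
          rw [← key m hm1 (by omega) 1]
          apply tsum_congr; intro d; push_cast; ring
        rw [k1, k2]; ring

lemma tsum_shift_sq (s : ℕ) (hs : 1 ≤ s) (c : ℝ) :
    ∑' d : ℤ, ((d:ℝ) + c)^2 * P s d = var (P s) + c^2 := by
  have e : ∀ d : ℤ, ((d:ℝ) + c)^2 * P s d
      = (d:ℝ)^2 * P s d + (2*c) * ((d:ℝ) * P s d) + c^2 * P s d := by
    intro d; ring
  have S1 := summable_gP s hs (fun d => (d:ℝ)^2)
  have S2 := (summable_gP s hs (fun d => (d:ℝ))).mul_left (2*c)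
  have S3 := (P_summable s hs).mul_left (c^2)
  rw [tsum_congr e, Summable.tsum_add (S1.add S2) S3, Summable.tsum_add S1 S2, tsum_mul_left,
    tsum_mul_left, P_mean s hs, P_mass s hs, var]
  ring

lemma V_even (t : ℕ) (ht : 1 ≤ t) : var (P (2*t)) = var (P t) := by
  unfold var
  exact tsum_congr (fun d => by rw [P_two_mul t ht])

lemma V_odd (t : ℕ) (ht : 1 ≤ t) :
    var (P (2*t+1)) = (1/2) * var (P (t+1)) + (1/2) * var (P t) + 1 := by
  have h1 : ∑' d : ℤ, ((d - 1 : ℤ):ℝ)^2 * P (t+1) d = var (P (t+1)) + 1 := by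
    rw [show (1:ℝ) = (-1)^2 by norm_num, ← tsum_shift_sq (t+1) (by omega) (-1)]
    apply tsum_congr; intro d; push_cast; ring
  have h2 : ∑' d : ℤ, ((d + 1 : ℤ):ℝ)^2 * P t d = var (P t) + 1 := by
    rw [show (1:ℝ) = (1:ℝ)^2 by norm_num, ← tsum_shift_sq t ht 1]
    apply tsum_congr; intro d; push_cast; ring
  unfold var
  rw [tsum_odd t ht (fun d => (d:ℝ)^2)]
  beta_reduce
  rw [h1, h2]
  unfold var
  ring

lemma V_diff : ∀ t : ℕ, 1 ≤ t → |var (P (t+1)) - var (P t)| ≤ 2 := by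
  intro t
  induction t using Nat.strong_induction_on with
  | _ t IH =>
    intro ht
    match t, ht with
    | 1, _ =>
      rw [show (1:ℕ)+1 = 2*1 by norm_num, V_even 1 le_rfl]
      simp
    | (n+2), _ =>
      rcases Nat.even_or_odd (n+2) with ⟨m, hm⟩ | ⟨m, hm⟩
      · have hm1 : 1 ≤ m := by omega
        have h2 : n + 2 = 2*m := by omega
        have D := IH m (by omega) hm1
        rw [h2, show 2*m+1 = 2*m+1 from rfl, V_odd m hm1, V_even m hm1]
        rw [abs_le] at D ⊢
        constructor <;> linarith [D.1, D.2]
      · have hm1 : 1 ≤ m := by omega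
        have h2 : n + 2 = 2*m+1 := by omega
        have D := IH m (by omega) hm1
        rw [h2, show 2*m+1+1 = 2*(m+1) by ring, V_odd m hm1, V_even (m+1) (by omega)]
        rw [abs_le] at D ⊢
        constructor <;> linarith [D.1, D.2]

lemma V_step (t : ℕ) (ht : 2 ≤ t) (c : LR) : var (P t) ≤ var (P (LRstep t c)) := by
  cases c
  · show var (P t) ≤ var (P (2*t-1))
    rw [show 2*t-1 = 2*(t-1)+1 by omega, V_odd (t-1) (by omega),
      show t-1+1 = t by omega]
    have D := V_diff (t-1) (by omega)
    rw [show t-1+1 = t by omega, abs_le] at D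
    linarith [D.1, D.2]
  · show var (P t) ≤ var (P (2*t+1))
    rw [V_odd t (by omega)]
    have D := V_diff t (by omega)
    rw [abs_le] at D
    linarith [D.1, D.2]

lemma LRstep_ge (t : ℕ) (ht : 2 ≤ t) (c : LR) : 2 ≤ LRstep t c := by
  cases c <;> simp [LRstep] <;> omega

lemma V_foldl : ∀ (v : List LR) (s : ℕ), 2 ≤ s →
    var (P s) ≤ var (P (List.foldl LRstep s v)) := by
  intro v
  induction v with
  | nil => intro s hs; simp
  | cons c v ih =>
    intro s hs
    rw [List.foldl_cons]
    exact (V_step s hs c).trans (ih (LRstep s c) (LRstep_ge s hs c))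

lemma hword_ge (w : List LR) : 2 ≤ hword w := by
  have : ∀ (v : List LR) (s : ℕ), 2 ≤ s → 2 ≤ List.foldl LRstep s v := by
    intro v
    induction v with
    | nil => intro s hs; simpa using hs
    | cons c v ih => intro s hs; exact ih _ (LRstep_ge s hs c)
  exact this w 3 (by norm_num)


/-- Monotonicity of the variance: if `u` is a prefix of `w`, then `D²[P_u] ≤ D²[P_w]`. -/
theorem variance_monotone (u w : List LR) (h : u <+: w) :
    var (P (hword u)) ≤ var (P (hword w)) := by
  obtain ⟨v, rfl⟩ := h
  rw [show hword (u ++ v) = List.foldl LRstep (hword u) v from by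
    simp [hword, List.foldl_append]]
  exact V_foldl v (hword u) (hword_ge u)
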